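/- Let R be a σ-finite nonnegative measure on Ω and P a probability measure on Ω with P ≪ R, such that H(P|R) is well-defined (i.e. ∫ W dP < ∞ for some measurable W ≥ 0 with ∫ e^{−W} dR < ∞). Then H(P|R) = sup{ ∫ u dP − log ∫ e^u dR : u measurable, ∫ e^u dR < ∞ and ∫ u_− dP < ∞ }, where u_− = max(−u,0) and ∫ u dP ∈ (−∞,∞] is well-defined whenever ∫ u_− dP < ∞. -/

import Mathlib

/-!
For a probability measure `S ≫ P` the formula is the Donsker–Varadhan variational principle.
The bound `∫ u dP - log ∫ eᵘ dS ≤ H(P|S)` is Gibbs' inequality for `P` against the tilted measure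
`eᵘ S / ∫ eᵘ dS`, once Fenchel–Young (`a b ≤ a log a - a + eᵇ`) has shown that `∫ u₊ dP < ∞`
whenever `H(P|S) < ∞`. The reverse bound comes from `u = log dP/dS`, replaced by `log ε` off the
support of `dP/dS`.

The σ-finite case reduces to this with `S = R_W = e^{-w} R`, where `w = W + log z_W`: the
substitution `u ↦ u + w` is a bijection between the admissible functions for `R` and for `R_W`,
and it shifts the functional by `∫ w dP = ∫ W dP + log z_W`, which is exactly the correction
in the definition of `H(P|R)`.
-/

open MeasureTheory
open scoped Classical

/-- Relative entropy `H(P|S) = ∫ log(dP/dS) dP ∈ (-∞,∞]` between (probability) measures,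
`+∞` if `P` is not absolutely continuous w.r.t. `S` or `log(dP/dS)` is not `P`-integrable. -/
noncomputable def relEnt {Ω : Type*} [MeasurableSpace Ω] (P S : Measure Ω) : EReal :=
  if P ≪ S ∧ Integrable (llr P S) P then ((∫ ω, llr P S ω ∂P : ℝ) : EReal) else ⊤

/-- The normalizing constant `z_W = ∫ e^{-W} dR`. -/
noncomputable def zW {Ω : Type*} [MeasurableSpace Ω] (R : Measure Ω) (W : Ω → ℝ) : ENNReal :=
  ∫⁻ ω, ENNReal.ofReal (Real.exp (-W ω)) ∂ R

/-- The tilted probability measure `R_W = z_W⁻¹ e^{-W}·R`. -/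
noncomputable def tiltedPM {Ω : Type*} [MeasurableSpace Ω] (R : Measure Ω) (W : Ω → ℝ) :
    Measure Ω :=
  (zW R W)⁻¹ • R.withDensity (fun ω => ENNReal.ofReal (Real.exp (-W ω)))

/-- Relative entropy with respect to a possibly unbounded (σ-finite) reference measure `R`,
defined through the tilting function `W` by `H(P|R) := H(P|R_W) - ∫ W dP - log z_W`. -/
noncomputable def relEntSF {Ω : Type*} [MeasurableSpace Ω] (R : Measure Ω) (W : Ω → ℝ)
    (P : Measure Ω) : EReal :=
  relEnt P (tiltedPM R W) - ((∫ ω, W ω ∂P : ℝ) : EReal)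
    - ((Real.log (zW R W).toReal : ℝ) : EReal)

open Real Filter
open scoped ENNReal

section ErealIntegral

variable {Ω : Type*} [MeasurableSpace Ω] {P : Measure Ω} {f g : Ω → ℝ}

/-- The paper's `∫ f dP ∈ (-∞, ∞]`, meaningful when `∫ f₋ dP < ∞` (otherwise `⊤ - ⊤ = ⊥`). -/
noncomputable def erealIntegral (P : Measure Ω) (f : Ω → ℝ) : EReal :=
  (∫⁻ ω, ENNReal.ofReal (f ω) ∂P : ℝ≥0∞) - (∫⁻ ω, ENNReal.ofReal (-f ω) ∂P : ℝ≥0∞)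

lemma integrable_of_lintegral_ofReal_ne_top (hf : AEMeasurable f P)
    (hpos : ∫⁻ ω, ENNReal.ofReal (f ω) ∂P ≠ ⊤) (hneg : ∫⁻ ω, ENNReal.ofReal (-f ω) ∂P ≠ ⊤) :
    Integrable f P := by
  refine ((integrable_toReal_of_lintegral_ne_top hf.ennreal_ofReal hpos).sub
    (integrable_toReal_of_lintegral_ne_top hf.neg.ennreal_ofReal hneg)).congr
    (Eventually.of_forall fun ω => ?_)
  simp only [Pi.sub_apply, Pi.neg_apply, ENNReal.toReal_ofReal', max_zero_sub_max_neg_zero_eq_self]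

lemma erealIntegral_eq_integral (hf : Integrable f P) : erealIntegral P f = ∫ ω, f ω ∂P := by
  rw [erealIntegral, integral_eq_lintegral_pos_part_sub_lintegral_neg_part hf, EReal.coe_sub,
    EReal.coe_ennreal_toReal hf.lintegral_lt_top.ne,
    EReal.coe_ennreal_toReal hf.fun_neg.lintegral_lt_top.ne]

lemma erealIntegral_eq_top (hpos : ∫⁻ ω, ENNReal.ofReal (f ω) ∂P = ⊤)
    (hneg : ∫⁻ ω, ENNReal.ofReal (-f ω) ∂P ≠ ⊤) : erealIntegral P f = ⊤ := by
  rw [erealIntegral, hpos, EReal.coe_ennreal_top]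
  exact EReal.top_sub (EReal.coe_ennreal_eq_top_iff.not.mpr hneg)

lemma erealIntegral_congr_ae (h : f =ᵐ[P] g) : erealIntegral P f = erealIntegral P g := by
  have hpos : (fun ω => ENNReal.ofReal (f ω)) =ᵐ[P] fun ω => ENNReal.ofReal (g ω) :=
    h.mono fun ω hω => by simp only [hω]
  have hneg : (fun ω => ENNReal.ofReal (-f ω)) =ᵐ[P] fun ω => ENNReal.ofReal (-g ω) :=
    h.mono fun ω hω => by simp only [hω]
  rw [erealIntegral, erealIntegral, lintegral_congr_ae hpos, lintegral_congr_ae hneg]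

lemma lintegral_ofReal_add_ne_top (hf : AEMeasurable f P)
    (hfpos : ∫⁻ ω, ENNReal.ofReal (f ω) ∂P ≠ ⊤) (hg : Integrable g P) :
    ∫⁻ ω, ENNReal.ofReal (f ω + g ω) ∂P ≠ ⊤ := by
  have hle : ∫⁻ ω, ENNReal.ofReal (f ω + g ω) ∂P
      ≤ ∫⁻ ω, ENNReal.ofReal (f ω) ∂P + ∫⁻ ω, ENNReal.ofReal (g ω) ∂P := by
    rw [← lintegral_add_left' hf.ennreal_ofReal]
    exact lintegral_mono fun ω => ENNReal.ofReal_add_le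
  exact ne_top_of_le_ne_top (ENNReal.add_ne_top.mpr ⟨hfpos, hg.lintegral_lt_top.ne⟩) hle

lemma lintegral_ofReal_neg_add_ne_top (hf : AEMeasurable f P)
    (hfneg : ∫⁻ ω, ENNReal.ofReal (-f ω) ∂P ≠ ⊤) (hg : Integrable g P) :
    ∫⁻ ω, ENNReal.ofReal (-(f ω + g ω)) ∂P ≠ ⊤ := by
  simpa only [neg_add, Pi.neg_apply] using lintegral_ofReal_add_ne_top hf.neg hfneg hg.fun_neg

lemma erealIntegral_add (hf : AEMeasurable f P) (hfneg : ∫⁻ ω, ENNReal.ofReal (-f ω) ∂P ≠ ⊤)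
    (hg : Integrable g P) :
    erealIntegral P (fun ω => f ω + g ω) = erealIntegral P f + ∫ ω, g ω ∂P := by
  by_cases hfpos : ∫⁻ ω, ENNReal.ofReal (f ω) ∂P = ⊤
  · have hsum : ∫⁻ ω, ENNReal.ofReal (f ω + g ω) ∂P = ⊤ := by
      by_contra hsum
      exact absurd hfpos
        (by simpa using lintegral_ofReal_add_ne_top (hf.add hg.aemeasurable) hsum hg.fun_neg)
    rw [erealIntegral_eq_top hfpos hfneg, erealIntegral_eq_top hsum
      (lintegral_ofReal_neg_add_ne_top hf hfneg hg), EReal.top_add_coe]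
  · have hfi := integrable_of_lintegral_ofReal_ne_top hf hfpos hfneg
    rw [erealIntegral_eq_integral (hfi.fun_add hg), erealIntegral_eq_integral hfi,
      integral_add hfi hg, EReal.coe_add]

end ErealIntegral

lemma EReal.le_of_forall_pos_sub_le {x y : EReal} (h : ∀ ε : ℝ, 0 < ε → x - ε ≤ y) : x ≤ y := by
  refine EReal.ge_of_forall_gt_iff_ge.mp fun z hz => ?_
  obtain ⟨z', hzz', hz'x⟩ := EReal.lt_iff_exists_real_btwn.mp hz
  have hz_lt : z < z' := EReal.coe_lt_coe_iff.mp hzz'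
  calc (z : EReal) = (z' : EReal) - ((z' - z : ℝ) : EReal) := by norm_cast; ring
    _ ≤ x - ((z' - z : ℝ) : EReal) := EReal.sub_le_sub hz'x.le le_rfl
    _ ≤ y := h (z' - z) (by linarith)

lemma Real.mul_le_mul_log_sub_add_exp {a : ℝ} (ha : 0 ≤ a) (b : ℝ) :
    a * b ≤ a * log a - a + exp b := by
  rcases ha.eq_or_lt with rfl | ha
  · simpa using (exp_pos b).le
  · have h := mul_le_mul_of_nonneg_left (add_one_le_exp (b - log a)) ha.le
    rw [exp_sub, exp_log ha, mul_div_cancel₀ _ ha.ne'] at h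
    linarith

section DonskerVaradhan

variable {Ω : Type*} [MeasurableSpace Ω] {P S : Measure Ω} {u : Ω → ℝ}

noncomputable def dvFunctional (P S : Measure Ω) (u : Ω → ℝ) : EReal :=
  erealIntegral P u - ENNReal.log (∫⁻ ω, ENNReal.ofReal (exp (u ω)) ∂S)

def dvSet (P S : Measure Ω) : Set EReal :=
  {x | ∃ u : Ω → ℝ, Measurable u ∧ (∫⁻ ω, ENNReal.ofReal (exp (u ω)) ∂S) ≠ ⊤ ∧
    (∫⁻ ω, ENNReal.ofReal (-u ω) ∂P) ≠ ⊤ ∧ x = dvFunctional P S u}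

lemma lintegral_ofReal_neg_llr_le [SigmaFinite P] [SigmaFinite S] (hPS : P ≪ S) :
    ∫⁻ ω, ENNReal.ofReal (-llr P S ω) ∂P ≤ S Set.univ := by
  rw [← lintegral_rnDeriv_mul hPS (f := fun ω => ENNReal.ofReal (-llr P S ω))
      (measurable_llr P S).neg.ennreal_ofReal.aemeasurable,
    ← lintegral_one]
  refine lintegral_mono_ae ?_
  filter_upwards [Measure.rnDeriv_lt_top P S] with ω hω
  set a := (P.rnDeriv S ω).toReal
  have ha : 0 ≤ a := ENNReal.toReal_nonneg
  calc P.rnDeriv S ω * ENNReal.ofReal (-llr P S ω) = ENNReal.ofReal (a * -log a) := by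
        rw [ENNReal.ofReal_mul ha, ENNReal.ofReal_toReal hω.ne, llr]
    _ ≤ ENNReal.ofReal 1 := ENNReal.ofReal_le_ofReal (by nlinarith [self_sub_one_le_mul_log ha])
    _ = 1 := ENNReal.ofReal_one

lemma lintegral_ofReal_le_lintegral_ofReal_llr_add [SigmaFinite P] [SigmaFinite S] (hPS : P ≪ S)
    (hu : Measurable u) :
    ∫⁻ ω, ENNReal.ofReal (u ω) ∂P
      ≤ ∫⁻ ω, ENNReal.ofReal (llr P S ω) ∂P + ∫⁻ ω, ENNReal.ofReal (exp (u ω)) ∂S := by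
  rw [← lintegral_rnDeriv_mul hPS hu.ennreal_ofReal.aemeasurable,
    ← lintegral_rnDeriv_mul hPS (measurable_llr P S).ennreal_ofReal.aemeasurable,
    ← lintegral_add_left' (by fun_prop)]
  refine lintegral_mono_ae ?_
  filter_upwards [Measure.rnDeriv_lt_top P S] with ω hω
  set a := (P.rnDeriv S ω).toReal
  have ha : 0 ≤ a := ENNReal.toReal_nonneg
  rw [← ENNReal.ofReal_toReal hω.ne, ← ENNReal.ofReal_mul ha, ← ENNReal.ofReal_mul ha]
  calc ENNReal.ofReal (a * u ω) ≤ ENNReal.ofReal (a * log a + exp (u ω)) :=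
        ENNReal.ofReal_le_ofReal (by linarith [mul_le_mul_log_sub_add_exp ha (u ω)])
    _ ≤ ENNReal.ofReal (a * llr P S ω) + ENNReal.ofReal (exp (u ω)) := ENNReal.ofReal_add_le

lemma integral_sub_log_integral_exp_le_integral_llr [IsProbabilityMeasure P] [SigmaFinite S]
    (hPS : P ≪ S) (hllr : Integrable (llr P S) P) (hu : Integrable u P)
    (hexp : Integrable (fun ω => exp (u ω)) S) :
    ∫ ω, u ω ∂P - log (∫ ω, exp (u ω) ∂S) ≤ ∫ ω, llr P S ω ∂P := by
  have : NeZero S := ⟨fun h => by simpa [h] using hPS (s := Set.univ)⟩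
  have := isProbabilityMeasure_tilted hexp
  have hPT : P ≪ S.tilted u := hPS.trans (absolutelyContinuous_tilted hexp)
  have h := InformationTheory.integral_llr_add_sub_measure_univ_nonneg hPT
    (integrable_llr_tilted_right hPS hu hllr hexp)
  rw [integral_llr_tilted_right hPS hu hexp hllr] at h
  simp only [probReal_univ, add_sub_cancel_right] at h
  linarith

lemma ENNReal.log_lintegral_ofReal_exp [NeZero S]
    (hexp : Integrable (fun ω => exp (u ω)) S) :
    ENNReal.log (∫⁻ ω, ENNReal.ofReal (exp (u ω)) ∂S) = Real.log (∫ ω, exp (u ω) ∂S) := by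
  rw [← ofReal_integral_eq_lintegral_ofReal hexp (Eventually.of_forall fun ω => (exp_pos _).le),
    ENNReal.log_ofReal_of_pos (integral_exp_pos hexp)]

lemma dvFunctional_le_relEnt [IsProbabilityMeasure P] [SigmaFinite S] (hu : Measurable u)
    (hexp : ∫⁻ ω, ENNReal.ofReal (exp (u ω)) ∂S ≠ ⊤)
    (hneg : ∫⁻ ω, ENNReal.ofReal (-u ω) ∂P ≠ ⊤) :
    dvFunctional P S u ≤ relEnt P S := by
  rw [relEnt]
  split_ifs with h
  swap
  · exact le_top
  obtain ⟨hPS, hllr⟩ := h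
  have : NeZero S := ⟨fun h => by simpa [h] using hPS (s := Set.univ)⟩
  have hpos : ∫⁻ ω, ENNReal.ofReal (u ω) ∂P ≠ ⊤ :=
    ne_top_of_le_ne_top (ENNReal.add_ne_top.mpr ⟨hllr.lintegral_lt_top.ne, hexp⟩)
      (lintegral_ofReal_le_lintegral_ofReal_llr_add hPS hu)
  have huP : Integrable u P := integrable_of_lintegral_ofReal_ne_top hu.aemeasurable hpos hneg
  have hexpS : Integrable (fun ω => exp (u ω)) S :=
    ⟨hu.exp.aestronglyMeasurable, (hasFiniteIntegral_iff_ofReal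
      (Eventually.of_forall fun ω => (exp_pos _).le)).mpr hexp.lt_top⟩
  rw [dvFunctional, erealIntegral_eq_integral huP,
    ENNReal.log_lintegral_ofReal_exp hexpS]
  exact_mod_cast integral_sub_log_integral_exp_le_integral_llr hPS hllr huP hexpS

lemma relEnt_eq_erealIntegral_llr [IsFiniteMeasure P] [IsFiniteMeasure S] (hPS : P ≪ S) :
    relEnt P S = erealIntegral P (llr P S) := by
  have hneg := ne_top_of_le_ne_top (measure_ne_top S _) (lintegral_ofReal_neg_llr_le hPS)
  rw [relEnt]
  split_ifs with h
  · exact (erealIntegral_eq_integral h.2).symm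
  · refine (erealIntegral_eq_top ?_ hneg).symm
    by_contra hpos
    exact h ⟨hPS, integrable_of_lintegral_ofReal_ne_top
      (measurable_llr P S).aemeasurable hpos hneg⟩

lemma erealIntegral_llr_sub_le_sSup_dvSet [IsProbabilityMeasure P] [IsProbabilityMeasure S]
    (hPS : P ≪ S) {ε : ℝ} (hε : 0 < ε) :
    erealIntegral P (llr P S) - ε ≤ sSup (dvSet P S) := by
  set f := P.rnDeriv S
  set u : Ω → ℝ := fun ω => if f ω = 0 then log ε else llr P S ω
  have hu : Measurable u :=
    Measurable.ite (Measure.measurable_rnDeriv P S (measurableSet_singleton 0))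
      measurable_const (measurable_llr P S)
  have hu_ae : u =ᵐ[P] llr P S := by
    filter_upwards [Measure.rnDeriv_pos hPS] with ω hω
    exact if_neg hω.ne'
  have hexp_le : ∫⁻ ω, ENNReal.ofReal (exp (u ω)) ∂S ≤ 1 + ENNReal.ofReal ε := by
    calc ∫⁻ ω, ENNReal.ofReal (exp (u ω)) ∂S ≤ ∫⁻ ω, f ω + ENNReal.ofReal ε ∂S := by
          refine lintegral_mono_ae ?_
          filter_upwards [Measure.rnDeriv_lt_top P S] with ω hω
          by_cases h0 : f ω = 0
          · simp [u, h0, exp_log hε]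
          · have : exp (u ω) = (f ω).toReal := by
              simp only [u, if_neg h0, llr]
              exact exp_log (ENNReal.toReal_pos h0 hω.ne)
            rw [this, ENNReal.ofReal_toReal hω.ne]
            exact le_self_add
      _ = 1 + ENNReal.ofReal ε := by
          rw [lintegral_add_right _ measurable_const, Measure.lintegral_rnDeriv hPS]
          simp
  have hexp : ∫⁻ ω, ENNReal.ofReal (exp (u ω)) ∂S ≠ ⊤ :=
    ne_top_of_le_ne_top (by simp) hexp_le
  have hneg : ∫⁻ ω, ENNReal.ofReal (-u ω) ∂P ≠ ⊤ := by
    have hneg_ae : (fun ω => ENNReal.ofReal (-u ω)) =ᵐ[P] fun ω => ENNReal.ofReal (-llr P S ω) :=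
      hu_ae.mono fun ω hω => by simp only [hω]
    rw [lintegral_congr_ae hneg_ae]
    exact ne_top_of_le_ne_top (measure_ne_top S _) (lintegral_ofReal_neg_llr_le hPS)
  have hlog : ENNReal.log (∫⁻ ω, ENNReal.ofReal (exp (u ω)) ∂S) ≤ ε := by
    calc ENNReal.log (∫⁻ ω, ENNReal.ofReal (exp (u ω)) ∂S)
        ≤ ENNReal.log (ENNReal.ofReal (1 + ε)) := by
          rw [ENNReal.ofReal_add zero_le_one hε.le, ENNReal.ofReal_one]
          exact ENNReal.log_monotone hexp_le
      _ ≤ ε := by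
          rw [ENNReal.log_ofReal_of_pos (by linarith), EReal.coe_le_coe_iff]
          linarith [log_le_sub_one_of_pos (by linarith : 0 < 1 + ε)]
  calc erealIntegral P (llr P S) - ε ≤ dvFunctional P S u := by
        rw [dvFunctional, erealIntegral_congr_ae hu_ae]
        exact EReal.sub_le_sub le_rfl hlog
    _ ≤ sSup (dvSet P S) := le_sSup ⟨u, hu, hexp, hneg, rfl⟩

theorem relEnt_eq_sSup_dvSet [IsProbabilityMeasure P] [IsProbabilityMeasure S] (hPS : P ≪ S) :
    relEnt P S = sSup (dvSet P S) := by
  refine le_antisymm ?_ (sSup_le ?_)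
  · rw [relEnt_eq_erealIntegral_llr hPS]
    exact EReal.le_of_forall_pos_sub_le fun ε hε => erealIntegral_llr_sub_le_sSup_dvSet hPS hε
  · rintro _ ⟨u, hu, hexp, hneg, rfl⟩
    exact dvFunctional_le_relEnt hu hexp hneg

end DonskerVaradhan

lemma EReal.sSup_image_add_coe (s : Set EReal) (c : ℝ) :
    sSup ((· + (c : EReal)) '' s) = sSup s + c := by
  refine (Monotone.map_sSup_of_continuousAt ?_ (fun _ _ h => add_le_add_left h _)
    (EReal.bot_add _)).symm
  exact (EReal.continuousAt_add (p := (sSup s, (c : EReal))) (Or.inr (EReal.coe_ne_bot c))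
    (Or.inr (EReal.coe_ne_top c))).comp (f := fun x => (x, (c : EReal))) (by fun_prop)

section ExponentialTilt

variable {Ω : Type*} [MeasurableSpace Ω] {P R : Measure Ω} {u w : Ω → ℝ}

lemma lintegral_exp_add_withDensity_exp_neg (hu : Measurable u) (hw : Measurable w) :
    ∫⁻ ω, ENNReal.ofReal (exp (u ω + w ω)) ∂(R.withDensity fun ω => ENNReal.ofReal (exp (-w ω)))
      = ∫⁻ ω, ENNReal.ofReal (exp (u ω)) ∂ R := by
  rw [lintegral_withDensity_eq_lintegral_mul _ (by fun_prop) (by fun_prop)]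
  refine lintegral_congr fun ω => ?_
  rw [Pi.mul_apply, ← ENNReal.ofReal_mul (exp_pos _).le, ← exp_add, neg_add_cancel_comm_assoc]

lemma dvFunctional_withDensity_exp_neg_add (hu : Measurable u)
    (hneg : ∫⁻ ω, ENNReal.ofReal (-u ω) ∂P ≠ ⊤) (hw : Measurable w) (hwP : Integrable w P) :
    dvFunctional P (R.withDensity fun ω => ENNReal.ofReal (exp (-w ω))) (fun ω => u ω + w ω)
      = dvFunctional P R u + ∫ ω, w ω ∂P := by
  rw [dvFunctional, dvFunctional, lintegral_exp_add_withDensity_exp_neg hu hw,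
    erealIntegral_add hu.aemeasurable hneg hwP, sub_eq_add_neg, sub_eq_add_neg, add_right_comm]

lemma dvSet_withDensity_exp_neg (hw : Measurable w) (hwP : Integrable w P) :
    dvSet P (R.withDensity fun ω => ENNReal.ofReal (exp (-w ω)))
      = (· + ((∫ ω, w ω ∂P : ℝ) : EReal)) '' dvSet P R := by
  ext x
  constructor
  · rintro ⟨v, hv, hexp, hneg, rfl⟩
    obtain ⟨u, rfl⟩ : ∃ u : Ω → ℝ, v = fun ω => u ω + w ω := ⟨fun ω => v ω - w ω, by simp⟩
    have hu : Measurable u := by convert hv.sub hw using 1; ext ω; simp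
    have hneg_u : ∫⁻ ω, ENNReal.ofReal (-u ω) ∂P ≠ ⊤ := by
      simpa using lintegral_ofReal_neg_add_ne_top hv.aemeasurable hneg hwP.fun_neg
    refine ⟨dvFunctional P R u, ⟨u, hu, ?_, hneg_u, rfl⟩,
      (dvFunctional_withDensity_exp_neg_add hu hneg_u hw hwP).symm⟩
    rwa [← lintegral_exp_add_withDensity_exp_neg hu hw]
  · rintro ⟨_, ⟨u, hu, hexp, hneg, rfl⟩, rfl⟩
    exact ⟨fun ω => u ω + w ω, hu.add hw, by rwa [lintegral_exp_add_withDensity_exp_neg hu hw],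
      lintegral_ofReal_neg_add_ne_top hu.aemeasurable hneg hwP,
      (dvFunctional_withDensity_exp_neg_add hu hneg hw hwP).symm⟩

end ExponentialTilt

section TiltedPM

variable {Ω : Type*} [MeasurableSpace Ω] {R : Measure Ω} {W : Ω → ℝ}

lemma zW_ne_zero (hW : Measurable W) (hR : R ≠ 0) : zW R W ≠ 0 := by
  rw [zW, Ne, lintegral_eq_zero_iff (by fun_prop)]
  intro h
  exact hR (by simpa [EventuallyEq, ENNReal.ofReal_eq_zero, not_le.mpr (exp_pos _)] using h)

lemma isProbabilityMeasure_tiltedPM (hz0 : zW R W ≠ 0) (hz : zW R W ≠ ⊤) :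
    IsProbabilityMeasure (tiltedPM R W) := by
  constructor
  rw [tiltedPM, Measure.smul_apply, withDensity_apply _ MeasurableSet.univ, setLIntegral_univ]
  exact ENNReal.inv_mul_cancel hz0 hz

lemma tiltedPM_eq_withDensity (hz0 : zW R W ≠ 0) (hz : zW R W ≠ ⊤) :
    tiltedPM R W
      = R.withDensity fun ω => ENNReal.ofReal (exp (-(W ω + log (zW R W).toReal))) := by
  rw [tiltedPM, ← withDensity_smul' _ _ (ENNReal.inv_ne_top.mpr hz0)]
  congr with ω
  have hz_pos : 0 < (zW R W).toReal := ENNReal.toReal_pos hz0 hz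
  rw [Pi.smul_apply, smul_eq_mul, neg_add, exp_add, exp_neg (log _), exp_log hz_pos,
    ENNReal.ofReal_mul (exp_pos _).le, ENNReal.ofReal_inv_of_pos hz_pos,
    ENNReal.ofReal_toReal hz, mul_comm]

end TiltedPM

theorem relEntSF_eq_sSup_of_absolutelyContinuous_general
    {Ω : Type*} [MeasurableSpace Ω] (R : Measure Ω)
    (P : Measure Ω) [IsProbabilityMeasure P] (hPR : P ≪ R)
    (W : Ω → ℝ) (hWm : Measurable W)
    (hzW : zW R W ≠ ⊤) (hWP : Integrable W P) :
    relEntSF R W P =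
      sSup { x : EReal | ∃ u : Ω → ℝ, Measurable u ∧
        (∫⁻ ω, ENNReal.ofReal (Real.exp (u ω)) ∂ R) ≠ ⊤ ∧
        (∫⁻ ω, ENNReal.ofReal (-u ω) ∂P) ≠ ⊤ ∧
        x = ((∫⁻ ω, ENNReal.ofReal (u ω) ∂P : ENNReal) : EReal)
              - ((∫⁻ ω, ENNReal.ofReal (-u ω) ∂P : ENNReal) : EReal)
              - ENNReal.log (∫⁻ ω, ENNReal.ofReal (Real.exp (u ω)) ∂ R) } := by
  change _ = sSup (dvSet P R)
  have hz0 : zW R W ≠ 0 := zW_ne_zero hWm fun h => by simpa [h] using hPR (s := Set.univ)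
  have := isProbabilityMeasure_tiltedPM hz0 hzW
  have hS := tiltedPM_eq_withDensity hz0 hzW
  have hPS : P ≪ tiltedPM R W := hPR.trans <| hS ▸ withDensity_absolutelyContinuous' (by fun_prop)
    (Eventually.of_forall fun ω => by positivity)
  rw [relEntSF, relEnt_eq_sSup_dvSet hPS, hS,
    dvSet_withDensity_exp_neg (hWm.add_const _) (hWP.add (integrable_const _)),
    EReal.sSup_image_add_coe, integral_add hWP (integrable_const _), integral_const,
    probReal_univ, one_smul, EReal.coe_add, ← add_assoc, add_right_comm,
    EReal.add_sub_cancel_right, EReal.add_sub_cancel_right]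

/-- Variational representation of `H(P|R)` for `P ≪ R` over the class of measurable `u`
with `∫ e^u dR < ∞` and `∫ u₋ dP < ∞` (where `∫ u dP ∈ (-∞,∞]` is then well defined as
`∫ u₊ dP - ∫ u₋ dP`): `H(P|R) = sup { ∫ u dP - log ∫ e^u dR }`. -/
theorem relEntSF_eq_sSup_of_absolutelyContinuous
    {Ω : Type*} [MeasurableSpace Ω] (R : Measure Ω) [SigmaFinite R]
    (P : Measure Ω) [IsProbabilityMeasure P] (hPR : P ≪ R)
    (W : Ω → ℝ) (hWm : Measurable W) (hW0 : ∀ ω, 0 ≤ W ω)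
    (hzW : zW R W ≠ ⊤) (hWP : Integrable W P) :
    relEntSF R W P =
      sSup { x : EReal | ∃ u : Ω → ℝ, Measurable u ∧
        (∫⁻ ω, ENNReal.ofReal (Real.exp (u ω)) ∂ R) ≠ ⊤ ∧
        (∫⁻ ω, ENNReal.ofReal (-u ω) ∂P) ≠ ⊤ ∧
        x = ((∫⁻ ω, ENNReal.ofReal (u ω) ∂P : ENNReal) : EReal)
              - ((∫⁻ ω, ENNReal.ofReal (-u ω) ∂P : ENNReal) : EReal)
              - ENNReal.log (∫⁻ ω, ENNReal.ofReal (Real.exp (u ω)) ∂ R) } :=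
  relEntSF_eq_sSup_of_absolutelyContinuous_general R P hPR W hWm hzW hWP
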